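/- Let K = 1 and assume a_{10} > 1, a_{11} > 1 and (a_{10} − a_{11})² − a_{1•} ≤ 0. Then the LOOCV squared prediction error PE is strictly decreasing on [0, ∞): for all 0 ≤ λ₁ < λ₂ one has PE(λ₂) < PE(λ₁); hence its infimum is approached only as λ → ∞ and is not attained at any finite λ. -/

import Mathlib

/-- Leave-one-out cross-validated squared prediction error for a saturated model with `K`
categories, counts `a0 k` (nonevents) and `a1 k` (events), and ridge penalty `l`. -/
noncomputable def loocvPE (K : ℕ) (a0 a1 : Fin K → ℕ) (l : ℝ) : ℝ :=
  (1 / ∑ k : Fin K, ((a0 k : ℝ) + (a1 k : ℝ))) *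
    ∑ k : Fin K,
      ((a0 k : ℝ) *
          (((a1 k : ℝ) + 2 * l) / ((a0 k : ℝ) + (a1 k : ℝ) - 1 + 4 * l)) ^ 2 +
       (a1 k : ℝ) *
          (1 - ((a1 k : ℝ) - 1 + 2 * l) / ((a0 k : ℝ) + (a1 k : ℝ) - 1 + 4 * l)) ^ 2)

/-!
Write `n = a₀ + a₁`, `s = a₀ - a₁` and `u = 1 / (n - 1 + 4λ)`. Both leave-one-out fits are affine
in `u`, namely `π̂₀ = (1 + (1 - s) u) / 2` and `1 - π̂₁ = (1 + (1 + s) u) / 2`, so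
`4 n · PE = n + 2 (n - s²) u + (n + (n - 2) s²) u²`. The hypothesis `s² ≤ n` makes the linear
coefficient nonnegative and `n ≥ 2` makes the quadratic one positive, so `PE` increases with
`u ≥ 0`, while `u` strictly decreases in `λ ≥ 0`.
-/

open Set

lemma strictMonoOn_quadratic_Ici {b c e : ℝ} (hc : 0 ≤ c) (he : 0 < e) :
    StrictMonoOn (fun u => b + c * u + e * u ^ 2) (Ici 0) := by
  intro u hu v _ huv
  have hsq : u ^ 2 < v ^ 2 := pow_lt_pow_left₀ huv hu two_ne_zero
  have hlin : c * u ≤ c * v := mul_le_mul_of_nonneg_left huv.le hc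
  have hquad : e * u ^ 2 < e * v ^ 2 := mul_lt_mul_of_pos_left hsq he
  dsimp only
  linarith

lemma loocvPE_one_eq (a0 a1 : ℕ) (l : ℝ) (hd : (a0 : ℝ) + a1 - 1 + 4 * l ≠ 0) :
    loocvPE 1 (fun _ => a0) (fun _ => a1) l =
      ((a0 + a1 : ℝ) + 2 * ((a0 + a1 : ℝ) - (a0 - a1 : ℝ) ^ 2) * (a0 + a1 - 1 + 4 * l)⁻¹ +
        ((a0 + a1 : ℝ) + (a0 + a1 - 2) * (a0 - a1 : ℝ) ^ 2) * (a0 + a1 - 1 + 4 * l)⁻¹ ^ 2) /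
        4 / (a0 + a1 : ℝ) := by
  simp only [loocvPE, Fin.sum_univ_one, div_eq_mul_inv _ ((a0 : ℝ) + a1 - 1 + 4 * l)]
  set u := ((a0 : ℝ) + a1 - 1 + 4 * l)⁻¹
  have hdu : ((a0 : ℝ) + a1 - 1 + 4 * l) * u = 1 := mul_inv_cancel₀ hd
  have hevent : ((a1 : ℝ) + 2 * l) * u = (1 + (1 - (a0 - a1)) * u) / 2 := by
    linear_combination (1 / 2 : ℝ) * hdu
  have hnonevent : 1 - ((a1 : ℝ) - 1 + 2 * l) * u = (1 + (1 + (a0 - a1)) * u) / 2 := by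
    linear_combination (-1 / 2 : ℝ) * hdu
  rw [hevent, hnonevent]
  ring

lemma loocvPE_one_strictAntiOn {a0 a1 : ℕ} (hn : 1 < a0 + a1)
    (hle : ((a0 : ℝ) - a1) ^ 2 - (a0 + a1) ≤ 0) :
    StrictAntiOn (loocvPE 1 (fun _ => a0) (fun _ => a1)) (Ici 0) := by
  have hn' : (2 : ℝ) ≤ a0 + a1 := by exact_mod_cast hn
  have hd : ∀ l ∈ Ici (0 : ℝ), 0 < (a0 + a1 - 1 + 4 * l : ℝ) := fun l (hl : 0 ≤ l) => by
    linarith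
  have hq := strictMonoOn_quadratic_Ici (b := (a0 + a1 : ℝ))
    (mul_nonneg zero_le_two (by linarith) : 0 ≤ 2 * ((a0 + a1 : ℝ) - (a0 - a1 : ℝ) ^ 2))
    (by positivity : 0 < (a0 + a1 : ℝ) + (a0 + a1 - 2) * (a0 - a1 : ℝ) ^ 2)
  intro l1 hl1 l2 hl2 h12
  rw [loocvPE_one_eq a0 a1 l1 (hd l1 hl1).ne', loocvPE_one_eq a0 a1 l2 (hd l2 hl2).ne']
  refine div_lt_div_of_pos_right (div_lt_div_of_pos_right ?_ four_pos) (by positivity)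
  refine hq (inv_pos.2 (hd l2 hl2)).le (inv_pos.2 (hd l1 hl1)).le ?_
  exact inv_strictAnti₀ (hd l1 hl1) (by linarith)

theorem stmt14_general (a10 a11 : ℕ) (h0 : 1 < a10)
    (hle : ((a10 : ℝ) - (a11 : ℝ)) ^ 2 - ((a10 : ℝ) + (a11 : ℝ)) ≤ 0) :
    (∀ l1 l2 : ℝ, 0 ≤ l1 → l1 < l2 →
      loocvPE 1 (fun _ => a10) (fun _ => a11) l2 <
        loocvPE 1 (fun _ => a10) (fun _ => a11) l1) ∧
    ¬ ∃ l : ℝ, 0 ≤ l ∧ ∀ l' : ℝ, 0 ≤ l' →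
      loocvPE 1 (fun _ => a10) (fun _ => a11) l ≤
        loocvPE 1 (fun _ => a10) (fun _ => a11) l' := by
  have hanti := loocvPE_one_strictAntiOn (by omega : 1 < a10 + a11) hle
  refine ⟨fun l1 l2 hl1 h12 => hanti hl1 (hl1.trans h12.le) h12, ?_⟩
  rintro ⟨l, hl, hmin⟩
  have hl' : 0 ≤ l + 1 := by linarith
  exact (hanti hl hl' (lt_add_one l)).not_ge (hmin (l + 1) hl')

/-- For `K = 1` with `a_{10}, a_{11} > 1` and `(a_{10} − a_{11})² − a_{1•} ≤ 0`, the LOOCV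
squared prediction error is strictly decreasing on `[0, ∞)`; hence its infimum is not
attained at any finite `λ`. -/
theorem stmt14 (a10 a11 : ℕ) (h0 : 1 < a10) (h1 : 1 < a11)
    (hle : ((a10 : ℝ) - (a11 : ℝ)) ^ 2 - ((a10 : ℝ) + (a11 : ℝ)) ≤ 0) :
    (∀ l1 l2 : ℝ, 0 ≤ l1 → l1 < l2 →
      loocvPE 1 (fun _ => a10) (fun _ => a11) l2 <
        loocvPE 1 (fun _ => a10) (fun _ => a11) l1) ∧
    ¬ ∃ l : ℝ, 0 ≤ l ∧ ∀ l' : ℝ, 0 ≤ l' →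
      loocvPE 1 (fun _ => a10) (fun _ => a11) l ≤
        loocvPE 1 (fun _ => a10) (fun _ => a11) l' :=
  stmt14_general a10 a11 h0 hle
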